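/- The Hadamard operator Q_n is an isometric isomorphism from ℓ²(V(Γ_n)) onto H¹₀(V(Γ_n)): for all f,g ∈ ℓ²(V(Γ_n)), ⟨Q_n f, Q_n g⟩_{∇,Γ_n} = ⟨f,g⟩_{V(Γ_n)}, and Q_n is bijective onto H¹₀(V(Γ_n)). -/

import Mathlib

open scoped BigOperators
open MeasureTheory ProbabilityTheory

attribute [local instance] Classical.propDecidable

noncomputable section

/-- A connected, locally finite graph with a positive symmetric conductance. -/
structure WeightedGraph (V : Type) where
  adj : V → V → Prop
  symm : ∀ {x y}, adj x y → adj y x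
  irrefl : ∀ x, ¬ adj x x
  locFin : ∀ x, {y | adj x y}.Finite
  connected : ∀ x y, Relation.ReflTransGen adj x y
  c : V → V → ℝ
  c_pos : ∀ {x y}, adj x y → 0 < c x y
  c_symm : ∀ x y, c x y = c y x
  c_eq_zero : ∀ {x y}, ¬ adj x y → c x y = 0

variable {V : Type}

/-- Weighted coboundary operator: `(df)(x,y) = √c(x,y) (f x - f y)`. -/
noncomputable def dd (G : WeightedGraph V) (f : V → ℝ) : V × V → ℝ :=
  fun e => Real.sqrt (G.c e.1 e.2) * (f e.1 - f e.2)

/-- Weighted boundary operator: `(d*φ)(x) = Σ_{e : e⁻ = x} √c(e) φ(e)`. -/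
noncomputable def dstar (G : WeightedGraph V) (φ : V × V → ℝ) : V → ℝ :=
  fun x => ∑ᶠ y ∈ {y | G.adj x y}, Real.sqrt (G.c x y) * φ (x, y)

/-- The weighted graph Laplacian `d*d`. -/
noncomputable def lap (G : WeightedGraph V) (f : V → ℝ) : V → ℝ :=
  fun x => ∑ᶠ y ∈ {y | G.adj x y}, G.c x y * (f x - f y)

/-- Stationary distribution `π(x) = Σ_{y ∼ x} c(x,y)`. -/
noncomputable def piw (G : WeightedGraph V) (x : V) : ℝ :=
  ∑ᶠ y ∈ {y | G.adj x y}, G.c x y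

/-- `E_U`: edges with at least one endpoint in `U`. -/
def edgesOf (G : WeightedGraph V) (U : Set V) : Set (V × V) :=
  {e | G.adj e.1 e.2 ∧ (e.1 ∈ U ∨ e.2 ∈ U)}

/-- Dirichlet (energy) inner product `⟨f,g⟩_{∇,U} = (1/2) Σ_{e ∈ E_U} df(e) dg(e)`. -/
noncomputable def dirInner (G : WeightedGraph V) (U : Set V) (f g : V → ℝ) : ℝ :=
  (1/2) * ∑ᶠ e ∈ edgesOf G U, dd G f e * dd G g e

/-- `ℓ²(U)` inner product `⟨f,g⟩_U = Σ_{x ∈ U} f x * g x`. -/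
noncomputable def l2Inner (U : Set V) (f g : V → ℝ) : ℝ := ∑ᶠ x ∈ U, f x * g x

/-- Dirichlet Laplacian `Δ_U f = 1_U · d*d f`. -/
noncomputable def dirLap (G : WeightedGraph V) (U : Set V) (f : V → ℝ) : V → ℝ :=
  fun x => if x ∈ U then lap G f x else 0

/-- `GU` is the discrete Green function of `U`:
`d*d G_U(·,y) = π(y) δ_y` on `U`, vanishing off `U`, and `G_U(·,y) = 0` for `y ∉ U`. -/
def IsGreen (G : WeightedGraph V) (U : Set V) (GU : V → V → ℝ) : Prop :=
  (∀ y, y ∉ U → ∀ x, GU x y = 0) ∧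
  (∀ y ∈ U, (∀ x, x ∉ U → GU x y = 0) ∧
    ∀ x ∈ U, lap G (fun z => GU z y) x = piw G y * (if x = y then 1 else 0))

/-- `P` is the discrete Poisson kernel of `U` relative to `W ⊂ U`:
`P(·,ξ)` is harmonic on `U \ W`, equals `δ_ξ` on `W`, vanishes off `U`. -/
def IsPoisson (G : WeightedGraph V) (U W : Set V) (P : V → V → ℝ) : Prop :=
  ∀ ξ ∈ W, (∀ x ∈ U \ W, lap G (fun z => P z ξ) x = 0) ∧
    (∀ x ∈ W, P x ξ = (if x = ξ then 1 else 0)) ∧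
    (∀ x, x ∉ U → P x ξ = 0)

/-- A discrete foliation of the weighted graph `G`, given by its layers of vertices. -/
structure DiscreteFoliation (G : WeightedGraph V) where
  layer : ℕ → Set V
  layer_nonempty : ∀ n, (layer n).Nonempty
  layer_finite : ∀ n, (layer n).Finite
  layer_disjoint : ∀ m n, m ≠ n → Disjoint (layer m) (layer n)
  layer_cover : ∀ x, ∃ n, x ∈ layer n
  adj_zero : ∀ x ∈ layer 0, ∀ y, G.adj x y → y ∈ layer 0 ∪ layer 1
  adj_succ : ∀ n, ∀ x ∈ layer (n + 1), ∀ y, G.adj x y →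
    y ∈ layer n ∪ layer (n + 1) ∪ layer (n + 2)

/-- The growth cluster `Γ_n`: union of the layers `γ_0, …, γ_n`. -/
def cluster {G : WeightedGraph V} (F : DiscreteFoliation G) (n : ℕ) : Set V :=
  ⋃ k ≤ n, F.layer k

/-- `R m` is the symmetric positive semidefinite square-root kernel of the
boundary normalized Green operator `G̃^⟨m⟩` on `ℓ²(V(γ_m))`. -/
def IsSqrtBoundaryGreen {G : WeightedGraph V} (F : DiscreteFoliation G)
    (Gm : V → V → ℝ) (m : ℕ) (R : V → V → ℝ) : Prop :=
  (∀ x y, x ∈ F.layer m → y ∈ F.layer m → R x y = R y x) ∧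
  (∀ x y, x ∉ F.layer m ∨ y ∉ F.layer m → R x y = 0) ∧
  (∀ f : V → ℝ, Function.support f ⊆ F.layer m →
    0 ≤ ∑ᶠ x ∈ F.layer m, (∑ᶠ y ∈ F.layer m, R x y * f y) * f x) ∧
  (∀ x ∈ F.layer m, ∀ y ∈ F.layer m,
    ∑ᶠ σ ∈ F.layer m, R x σ * R σ y = Gm x y / piw G y)

/-- The Hadamard kernel `K_m(x,ξ) = Σ_{η ∈ γ_m} P_m(x,η) R̃_m(η,ξ)`. -/
noncomputable def hadK {G : WeightedGraph V} (F : DiscreteFoliation G)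
    (P R : ℕ → V → V → ℝ) (m : ℕ) (x ξ : V) : ℝ :=
  ∑ᶠ η ∈ F.layer m, P m x η * R m η ξ

/-- The Hadamard operator `Q_n f (x) = Σ_{y ∈ V(Γ_n)} K_{t(y)}(x,y) f(y)`. -/
noncomputable def hadQ {G : WeightedGraph V} (F : DiscreteFoliation G)
    (P R : ℕ → V → V → ℝ) (t : V → ℕ) (n : ℕ) (f : V → ℝ) : V → ℝ :=
  fun x => ∑ᶠ y ∈ cluster F n, hadK F P R (t y) x y * f y

/-- The adjoint Hadamard operator `Q_n* f (x) = Σ_{y ∈ V(Γ_n)} K_{t(x)}(y,x) f(y)`. -/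
noncomputable def hadQstar {G : WeightedGraph V} (F : DiscreteFoliation G)
    (P R : ℕ → V → V → ℝ) (t : V → ℕ) (n : ℕ) (f : V → ℝ) : V → ℝ :=
  fun x => ∑ᶠ y ∈ cluster F n, hadK F P R (t x) y x * f y

section Aux

lemma finsum_mem_fin {M : Type*} [AddCommMonoid M] {S : Set V} (hS : S.Finite) (f : V → M) :
    ∑ᶠ i ∈ S, f i = ∑ i ∈ hS.toFinset, f i := by
  conv_lhs => rw [← Set.Finite.coe_toFinset hS]
  exact finsum_mem_coe_finset _ _

variable (G : WeightedGraph V)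

def nbr (x : V) : Finset V := (G.locFin x).toFinset

lemma mem_nbr {x y : V} : y ∈ nbr G x ↔ G.adj x y := (G.locFin x).mem_toFinset

lemma lap_eq (f : V → ℝ) (x : V) :
    lap G f x = ∑ y ∈ nbr G x, G.c x y * (f x - f y) :=
  finsum_mem_fin (G.locFin x) _

lemma piw_eq (x : V) : piw G x = ∑ y ∈ nbr G x, G.c x y :=
  finsum_mem_fin (G.locFin x) _

lemma piw_pos {x : V} (hx : ∃ z, z ≠ x) : 0 < piw G x := by
  obtain ⟨z, hz⟩ := hx
  obtain ⟨y, hy⟩ : ∃ y, G.adj x y := by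
    rcases Relation.ReflTransGen.cases_head (G.connected x z) with h | ⟨c, hc, -⟩
    · exact absurd h.symm hz
    · exact ⟨c, hc⟩
  rw [piw_eq]
  calc (0:ℝ) < G.c x y := G.c_pos hy
    _ ≤ ∑ w ∈ nbr G x, G.c x w :=
      Finset.single_le_sum (fun w hw => (G.c_pos (mem_nbr G |>.mp hw)).le)
        ((mem_nbr G).mpr hy)

lemma edgesOf_finite {U : Set V} (hU : U.Finite) : (edgesOf G U).Finite := by
  have hbig : (⋃ x ∈ U, ((({x} : Set V) ×ˢ {y | G.adj x y}) ∪
      ({y | G.adj x y} ×ˢ ({x} : Set V)))).Finite :=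
    hU.biUnion (fun x _ => ((Set.finite_singleton x).prod (G.locFin x)).union
      ((G.locFin x).prod (Set.finite_singleton x)))
  refine hbig.subset ?_
  rintro ⟨a, b⟩ ⟨hadj, hU'⟩
  rcases hU' with h | h
  · exact Set.mem_biUnion h (Or.inl ⟨rfl, hadj⟩)
  · exact Set.mem_biUnion h (Or.inr ⟨G.symm hadj, rfl⟩)

lemma dirInner_eq' {U : Set V} (hU : U.Finite) (f g : V → ℝ) :
    dirInner G U f g =
      (1/2) * ∑ e ∈ (edgesOf_finite G hU).toFinset, dd G f e * dd G g e := by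
  unfold dirInner
  rw [finsum_mem_fin (edgesOf_finite G hU)]

lemma dirInner_eq {U : Set V} (hU : U.Finite) (f g : V → ℝ) :
    dirInner G U f g = (1/2) * ∑ e ∈ (edgesOf_finite G hU).toFinset,
      G.c e.1 e.2 * ((f e.1 - f e.2) * (g e.1 - g e.2)) := by
  rw [dirInner_eq' G hU]
  congr 1
  refine Finset.sum_congr rfl (fun e he => ?_)
  have hadj : G.adj e.1 e.2 := ((edgesOf_finite G hU).mem_toFinset.mp he).1
  have hc : 0 ≤ G.c e.1 e.2 := (G.c_pos hadj).le
  show Real.sqrt (G.c e.1 e.2) * (f e.1 - f e.2) *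
      (Real.sqrt (G.c e.1 e.2) * (g e.1 - g e.2)) = _
  rw [show Real.sqrt (G.c e.1 e.2) * (f e.1 - f e.2) *
      (Real.sqrt (G.c e.1 e.2) * (g e.1 - g e.2))
      = (Real.sqrt (G.c e.1 e.2) * Real.sqrt (G.c e.1 e.2)) *
        ((f e.1 - f e.2) * (g e.1 - g e.2)) by ring,
    Real.mul_self_sqrt hc]

lemma dirInner_comm {U : Set V} (f g : V → ℝ) :
    dirInner G U f g = dirInner G U g f := by
  unfold dirInner
  congr 1
  exact finsum_mem_congr rfl (fun e _ => mul_comm _ _)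

end Aux

section Aux2

variable (G : WeightedGraph V)

lemma dirInner_eq_sum_lap {U : Set V} (hU : U.Finite) {f : V → ℝ} (g : V → ℝ)
    (hf : Function.support f ⊆ U) :
    dirInner G U f g = ∑ x ∈ hU.toFinset, f x * lap G g x := by
  classical
  set E := (edgesOf_finite G hU).toFinset with hE
  have hmemE : ∀ e : V × V, e ∈ E ↔ (G.adj e.1 e.2 ∧ (e.1 ∈ U ∨ e.2 ∈ U)) :=
    fun e => (edgesOf_finite G hU).mem_toFinset
  set q : V × V → ℝ := fun e => G.c e.1 e.2 * (f e.1 * (g e.1 - g e.2)) with hq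
  -- swap reindex
  have hswap : ∑ e ∈ E, q e.swap = ∑ e ∈ E, q e := by
    refine Finset.sum_nbij' (i := Prod.swap) (j := Prod.swap) ?_ ?_ ?_ ?_ ?_
    · intro e he
      rcases (hmemE e).mp he with ⟨hadj, h⟩
      exact (hmemE e.swap).mpr ⟨G.symm hadj, h.symm⟩
    · intro e he
      rcases (hmemE e).mp he with ⟨hadj, h⟩
      exact (hmemE e.swap).mpr ⟨G.symm hadj, h.symm⟩
    · intro e _; rfl
    · intro e _; rfl
    · intro e _; rfl
  have step1 : dirInner G U f g = ∑ e ∈ E, q e := by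
    rw [dirInner_eq G hU]
    have : ∑ e ∈ E, G.c e.1 e.2 * ((f e.1 - f e.2) * (g e.1 - g e.2))
        = ∑ e ∈ E, (q e + q e.swap) := by
      refine Finset.sum_congr rfl (fun e _ => ?_)
      simp only [hq, Prod.fst_swap, Prod.snd_swap]
      rw [G.c_symm e.2 e.1]
      ring
    rw [this, Finset.sum_add_distrib, hswap]
    ring
  rw [step1]
  -- restrict to edges with first endpoint in U
  have step2 : ∑ e ∈ E, q e = ∑ e ∈ E.filter (fun e => e.1 ∈ U), q e := by
    refine (Finset.sum_filter_of_ne (fun e _ hne => ?_)).symm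
    by_contra hx
    have : f e.1 = 0 := Function.notMem_support.mp (fun hs => hx (hf hs))
    simp [hq, this] at hne
  rw [step2]
  -- regroup as a sigma sum
  have step3 : ∑ e ∈ E.filter (fun e => e.1 ∈ U), q e
      = ∑ p ∈ hU.toFinset.sigma (fun x => nbr G x), q (p.1, p.2) := by
    refine (Finset.sum_nbij' (i := fun p : (_ : V) × V => (p.1, p.2))
      (j := fun e : V × V => ⟨e.1, e.2⟩) ?_ ?_ ?_ ?_ ?_).symm
    · intro p hp
      rw [Finset.mem_sigma] at hp
      obtain ⟨h1, h2⟩ := hp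
      rw [Finset.mem_filter]
      have h1' : p.1 ∈ U := hU.mem_toFinset.mp h1
      exact ⟨(hmemE _).mpr ⟨(mem_nbr G).mp h2, Or.inl h1'⟩, h1'⟩
    · intro e he
      rw [Finset.mem_filter] at he
      rw [Finset.mem_sigma]
      exact ⟨hU.mem_toFinset.mpr he.2, (mem_nbr G).mpr ((hmemE e).mp he.1).1⟩
    · intro p _; rfl
    · intro e _; rfl
    · intro p _; rfl
  rw [step3, Finset.sum_sigma]
  refine Finset.sum_congr rfl (fun x _ => ?_)
  rw [lap_eq, Finset.mul_sum]
  refine Finset.sum_congr rfl (fun y _ => ?_)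
  simp only [hq]; ring

lemma eq_zero_of_energy {U : Set V} (hU : U.Finite) {z : V} (hz : z ∉ U)
    {u : V → ℝ} (hsupp : Function.support u ⊆ U)
    (h0 : dirInner G U u u = 0) : ∀ x, u x = 0 := by
  rw [dirInner_eq G hU] at h0
  have hterms : ∀ e ∈ (edgesOf_finite G hU).toFinset,
      G.c e.1 e.2 * ((u e.1 - u e.2) * (u e.1 - u e.2)) = 0 := by
    have hnn : ∀ e ∈ (edgesOf_finite G hU).toFinset,
        0 ≤ G.c e.1 e.2 * ((u e.1 - u e.2) * (u e.1 - u e.2)) := by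
      intro e he
      have hadj : G.adj e.1 e.2 := ((edgesOf_finite G hU).mem_toFinset.mp he).1
      exact mul_nonneg (G.c_pos hadj).le (mul_self_nonneg _)
    have hsum : ∑ e ∈ (edgesOf_finite G hU).toFinset,
        G.c e.1 e.2 * ((u e.1 - u e.2) * (u e.1 - u e.2)) = 0 := by linarith
    exact (Finset.sum_eq_zero_iff_of_nonneg hnn).mp hsum
  have hloc : ∀ a b, G.adj a b → u a = u b := by
    intro a b hab
    by_cases hU' : a ∈ U ∨ b ∈ U
    · have he : (a, b) ∈ (edgesOf_finite G hU).toFinset :=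
        (edgesOf_finite G hU).mem_toFinset.mpr ⟨hab, hU'⟩
      have := hterms (a, b) he
      have hcne : G.c a b ≠ 0 := ne_of_gt (G.c_pos hab)
      have h2 : (u a - u b) * (u a - u b) = 0 := by
        rcases mul_eq_zero.mp this with h | h
        · exact absurd h hcne
        · exact h
      have := mul_self_eq_zero.mp h2
      linarith
    · push_neg at hU'
      rw [Function.notMem_support.mp (fun hs => hU'.1 (hsupp hs)),
        Function.notMem_support.mp (fun hs => hU'.2 (hsupp hs))]
  have hRT : ∀ a b, Relation.ReflTransGen G.adj a b → u a = u b := by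
    intro a b h
    induction h with
    | refl => rfl
    | tail _ hbc ih => exact ih.trans (hloc _ _ hbc)
  intro x
  rw [hRT x z (G.connected x z)]
  exact Function.notMem_support.mp (fun hs => hz (hsupp hs))

lemma eq_zero_of_harmonic {U : Set V} (hU : U.Finite) {z : V} (hz : z ∉ U)
    {u : V → ℝ} (hsupp : Function.support u ⊆ U)
    (hharm : ∀ x ∈ U, lap G u x = 0) : ∀ x, u x = 0 := by
  refine eq_zero_of_energy G hU hz hsupp ?_
  rw [dirInner_eq_sum_lap G hU u hsupp]
  refine Finset.sum_eq_zero (fun x hx => ?_)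
  rw [hharm x (hU.mem_toFinset.mp hx), mul_zero]

end Aux2

section Aux3

variable (G : WeightedGraph V)

lemma lap_finset_sum {ι : Type*} (T : Finset ι) (ψ : ι → V → ℝ) (x : V) :
    lap G (fun v => ∑ i ∈ T, ψ i v) x = ∑ i ∈ T, lap G (ψ i) x := by
  simp only [lap_eq]
  rw [Finset.sum_comm]
  refine Finset.sum_congr rfl (fun y _ => ?_)
  rw [← Finset.sum_sub_distrib, Finset.mul_sum]

lemma lap_mul_const (f : V → ℝ) (a : ℝ) (x : V) :
    lap G (fun v => f v * a) x = lap G f x * a := by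
  simp only [lap_eq, Finset.sum_mul]
  refine Finset.sum_congr rfl (fun y _ => ?_); ring

lemma lap_sub (f g : V → ℝ) (x : V) :
    lap G (fun v => f v - g v) x = lap G f x - lap G g x := by
  simp only [lap_eq, ← Finset.sum_sub_distrib]
  refine Finset.sum_congr rfl (fun y _ => ?_); ring

lemma lap_green_comb {U : Set V} (hU : U.Finite) {GU : V → V → ℝ}
    (hG : IsGreen G U GU) (hpi : ∀ x, 0 < piw G x)
    (T : Finset V) (hT : ↑T ⊆ U) (k : V → ℝ) :
    ∀ x ∈ U, lap G (fun v => ∑ y ∈ T, GU v y * (k y / piw G y)) x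
      = if x ∈ T then k x else 0 := by
  intro x hx
  rw [lap_finset_sum]
  have : ∀ y ∈ T, lap G (fun v => GU v y * (k y / piw G y)) x
      = if x = y then k y else 0 := by
    intro y hy
    have hyU : y ∈ U := hT hy
    rw [lap_mul_const, (hG.2 y hyU).2 x hx]
    split_ifs with h
    · rw [mul_one, mul_comm, div_mul_cancel₀ _ (ne_of_gt (hpi y))]
    · ring
  rw [Finset.sum_congr rfl this, Finset.sum_ite_eq]

lemma green_comb_supp {U : Set V} {GU : V → V → ℝ}
    (hG : IsGreen G U GU) (T : Finset V) (hT : ↑T ⊆ U) (k : V → ℝ)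
    {x : V} (hx : x ∉ U) :
    ∑ y ∈ T, GU x y * (k y / piw G y) = 0 := by
  refine Finset.sum_eq_zero (fun y hy => ?_)
  rw [(hG.2 y (hT hy)).1 x hx, zero_mul]

lemma green_rep {U : Set V} (hU : U.Finite) {GU : V → V → ℝ}
    (hG : IsGreen G U GU) {z : V} (hz : z ∉ U) (hpi : ∀ x, 0 < piw G x)
    {u : V → ℝ} (hsupp : Function.support u ⊆ U) :
    ∀ x, u x = ∑ y ∈ hU.toFinset, GU x y * (lap G u y / piw G y) := by
  set w : V → ℝ := fun x => ∑ y ∈ hU.toFinset, GU x y * (lap G u y / piw G y) with hw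
  have hT : ↑hU.toFinset ⊆ U := by rw [Set.Finite.coe_toFinset]
  have hd : ∀ x, u x - w x = 0 := by
    refine eq_zero_of_harmonic G hU hz (u := fun v => u v - w v) ?_ ?_
    · intro x hx
      rw [Function.mem_support] at hx
      by_contra hxU
      apply hx
      show u x - (∑ y ∈ hU.toFinset, GU x y * (lap G u y / piw G y)) = 0
      rw [Function.notMem_support.mp (fun hs => hxU (hsupp hs)),
        green_comb_supp G hG _ hT _ hxU, sub_zero]
    · intro x hx
      rw [lap_sub, lap_green_comb G hU hG hpi _ hT _ x hx,
        if_pos (hU.mem_toFinset.mpr hx), sub_self]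
  intro x
  have := hd x
  linarith

end Aux3

section Aux4

variable {G : WeightedGraph V} (F : DiscreteFoliation G)

lemma mem_cluster {m : ℕ} {x : V} : x ∈ cluster F m ↔ ∃ k, k ≤ m ∧ x ∈ F.layer k := by
  simp [cluster]

lemma layer_subset_cluster {k m : ℕ} (h : k ≤ m) : F.layer k ⊆ cluster F m :=
  fun x hx => (mem_cluster F).mpr ⟨k, h, hx⟩

lemma cluster_finite (m : ℕ) : (cluster F m).Finite :=
  Set.Finite.biUnion (Set.finite_Iic m) (fun k _ => F.layer_finite k)

lemma cluster_mono {m m' : ℕ} (h : m ≤ m') : cluster F m ⊆ cluster F m' := by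
  intro x hx
  obtain ⟨k, hk, hx⟩ := (mem_cluster F).mp hx
  exact (mem_cluster F).mpr ⟨k, hk.trans h, hx⟩

lemma layer_notin_cluster {m m' : ℕ} (h : m < m') {x : V} (hx : x ∈ F.layer m') :
    x ∉ cluster F m := by
  intro hc
  obtain ⟨k, hk, hxk⟩ := (mem_cluster F).mp hc
  exact Set.disjoint_left.mp (F.layer_disjoint k m' (by omega)) hxk hx

lemma exists_notin_cluster (m : ℕ) : ∃ z, z ∉ cluster F m := by
  obtain ⟨z, hz⟩ := F.layer_nonempty (m + 1)
  exact ⟨z, layer_notin_cluster F (by omega) hz⟩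

include F in
lemma piw_pos_all : ∀ x, 0 < piw G x := by
  obtain ⟨a, ha⟩ := F.layer_nonempty 0
  obtain ⟨b, hb⟩ := F.layer_nonempty 1
  have hab : a ≠ b := by
    intro h
    exact Set.disjoint_left.mp (F.layer_disjoint 0 1 (by omega)) ha (h ▸ hb)
  intro x
  by_cases hxa : x = a
  · exact piw_pos G ⟨b, fun h => hab (h ▸ hxa).symm⟩
  · exact piw_pos G ⟨a, fun h => hxa h.symm⟩

lemma t_eq {t : V → ℕ} (ht : ∀ ξ, ξ ∈ F.layer (t ξ)) {k : ℕ} {y : V}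
    (hy : y ∈ F.layer k) : t y = k := by
  by_contra h
  exact Set.disjoint_left.mp (F.layer_disjoint (t y) k h) (ht y) hy

variable (P R : ℕ → V → V → ℝ)

lemma hadK_eq (m : ℕ) (x ξ : V) :
    hadK F P R m x ξ = ∑ η ∈ (F.layer_finite m).toFinset, P m x η * R m η ξ :=
  finsum_mem_fin _ _

lemma hadK_supp {m : ℕ} (hP : IsPoisson G (cluster F m) (F.layer m) (P m))
    {x : V} (hx : x ∉ cluster F m) (ξ : V) : hadK F P R m x ξ = 0 := by
  rw [hadK_eq]
  refine Finset.sum_eq_zero (fun η hη => ?_)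
  rw [(hP η ((F.layer_finite m).mem_toFinset.mp hη)).2.2 x hx, zero_mul]

lemma hadK_layer {m : ℕ} (hP : IsPoisson G (cluster F m) (F.layer m) (P m))
    {x : V} (hx : x ∈ F.layer m) (ξ : V) : hadK F P R m x ξ = R m x ξ := by
  rw [hadK_eq]
  have h1 : ∀ η ∈ (F.layer_finite m).toFinset,
      P m x η * R m η ξ = if x = η then R m η ξ else 0 := by
    intro η hη
    rw [(hP η ((F.layer_finite m).mem_toFinset.mp hη)).2.1 x hx]
    split_ifs <;> simp
  rw [Finset.sum_congr rfl h1, Finset.sum_ite_eq,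
    if_pos ((F.layer_finite m).mem_toFinset.mpr hx)]

lemma hadK_harmonic {m : ℕ} (hP : IsPoisson G (cluster F m) (F.layer m) (P m))
    {x : V} (hx : x ∈ cluster F m) (hx' : x ∉ F.layer m) (ξ : V) :
    lap G (fun v => hadK F P R m v ξ) x = 0 := by
  have h0 : (fun v => hadK F P R m v ξ)
      = fun v => ∑ η ∈ (F.layer_finite m).toFinset, P m v η * R m η ξ :=
    funext (fun v => hadK_eq F P R m v ξ)
  rw [h0, lap_finset_sum]
  refine Finset.sum_eq_zero (fun η hη => ?_)
  rw [lap_mul_const,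
    ((hP η ((F.layer_finite m).mem_toFinset.mp hη)).1 x ⟨hx, hx'⟩), zero_mul]

lemma hadK_supp' {m : ℕ} (hP : IsPoisson G (cluster F m) (F.layer m) (P m)) (ξ : V) :
    Function.support (fun v => hadK F P R m v ξ) ⊆ cluster F m := by
  intro x hx
  by_contra hxc
  exact hx (hadK_supp F P R hP hxc ξ)

end Aux4

section Aux5

variable {G : WeightedGraph V} (F : DiscreteFoliation G)

lemma R_inj {Gm : V → V → ℝ} {m : ℕ} (hGm : IsGreen G (cluster F m) Gm)
    {Rm : V → V → ℝ} (hRm : IsSqrtBoundaryGreen F Gm m Rm)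
    {v : V → ℝ} (hvs : Function.support v ⊆ F.layer m)
    (hRv : ∀ x ∈ F.layer m, ∑ σ ∈ (F.layer_finite m).toFinset, Rm x σ * v σ = 0) :
    ∀ x, v x = 0 := by
  have hpi : ∀ x, 0 < piw G x := piw_pos_all F
  set Lm := (F.layer_finite m).toFinset with hLm
  have hmemL : ∀ x, x ∈ Lm ↔ x ∈ F.layer m := fun x => (F.layer_finite m).mem_toFinset
  have hUfin := cluster_finite F m
  have hTL : ↑Lm ⊆ cluster F m := by
    rw [hLm, Set.Finite.coe_toFinset]
    exact layer_subset_cluster F le_rfl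
  set w : V → ℝ := fun x => ∑ y ∈ Lm, Gm x y * (v y / piw G y) with hw
  have hwsupp : Function.support w ⊆ cluster F m := by
    intro x hx
    by_contra hxc
    exact hx (green_comb_supp G hGm Lm hTL v hxc)
  have hlapw : ∀ x ∈ cluster F m, lap G w x = if x ∈ Lm then v x else 0 :=
    fun x hx => lap_green_comb G hUfin hGm hpi Lm hTL v x hx
  have hGR : ∀ x ∈ F.layer m, ∀ y ∈ F.layer m,
      ∑ σ ∈ Lm, Rm x σ * Rm σ y = Gm x y / piw G y := by
    intro x hx y hy
    rw [← finsum_mem_fin (F.layer_finite m)]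
    exact hRm.2.2.2 x hx y hy
  have hw0 : ∀ x ∈ F.layer m, w x = 0 := by
    intro x hx
    show (∑ y ∈ Lm, Gm x y * (v y / piw G y)) = 0
    have h1 : ∀ y ∈ Lm, Gm x y * (v y / piw G y)
        = ∑ σ ∈ Lm, (Rm x σ * Rm σ y) * v y := by
      intro y hy
      rw [← Finset.sum_mul, hGR x hx y ((hmemL y).mp hy)]
      have := (hpi y).ne'
      field_simp
    rw [Finset.sum_congr rfl h1, Finset.sum_comm]
    refine Finset.sum_eq_zero (fun σ hσ => ?_)
    have h2 : ∀ y ∈ Lm, Rm x σ * Rm σ y * v y = Rm x σ * (Rm σ y * v y) :=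
      fun y _ => mul_assoc _ _ _
    rw [Finset.sum_congr rfl h2, ← Finset.mul_sum, hRv σ ((hmemL σ).mp hσ), mul_zero]
  have henergy : dirInner G (cluster F m) w w = 0 := by
    rw [dirInner_eq_sum_lap G hUfin w hwsupp]
    refine Finset.sum_eq_zero (fun x hx => ?_)
    rw [hlapw x (hUfin.mem_toFinset.mp hx)]
    by_cases hxl : x ∈ Lm
    · rw [if_pos hxl, hw0 x ((hmemL x).mp hxl), zero_mul]
    · rw [if_neg hxl, mul_zero]
  obtain ⟨z, hz⟩ := exists_notin_cluster F m
  have hwz : ∀ x, w x = 0 := eq_zero_of_energy G hUfin hz hwsupp henergy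
  intro x
  by_cases hx : x ∈ F.layer m
  · have hxU : x ∈ cluster F m := layer_subset_cluster F le_rfl hx
    have h3 : lap G w x = v x := by
      rw [hlapw x hxU, if_pos ((hmemL x).mpr hx)]
    rw [← h3, lap_eq]
    refine Finset.sum_eq_zero (fun y _ => ?_)
    rw [hwz, hwz]; ring
  · exact Function.notMem_support.mp (fun hs => hx (hvs hs))

end Aux5

section Aux6

variable {G : WeightedGraph V} (F : DiscreteFoliation G)

lemma hadK_lap_delta (P R : ℕ → V → V → ℝ) {Gmm : V → V → ℝ} {m : ℕ}
    (hGm : IsGreen G (cluster F m) Gmm)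
    (hP : IsPoisson G (cluster F m) (F.layer m) (P m))
    (hRm : IsSqrtBoundaryGreen F Gmm m (R m))
    {ξ' : V} (hξ' : ξ' ∈ F.layer m) :
    ∀ x ∈ F.layer m, ∑ σ ∈ (F.layer_finite m).toFinset,
      R m x σ * lap G (fun v => hadK F P R m v ξ') σ = if x = ξ' then 1 else 0 := by
  have hpi : ∀ x, 0 < piw G x := piw_pos_all F
  set Lm := (F.layer_finite m).toFinset with hLm
  have hmemL : ∀ x, x ∈ Lm ↔ x ∈ F.layer m := fun x => (F.layer_finite m).mem_toFinset
  have hUfin := cluster_finite F m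
  obtain ⟨z, hz⟩ := exists_notin_cluster F m
  set h : V → ℝ := fun σ => lap G (fun v => hadK F P R m v ξ') σ with hh
  have hGR : ∀ x ∈ F.layer m, ∀ y ∈ F.layer m,
      ∑ σ ∈ Lm, R m x σ * R m σ y = Gmm x y / piw G y := by
    intro x hx y hy
    rw [← finsum_mem_fin (F.layer_finite m)]
    exact hRm.2.2.2 x hx y hy
  -- Green representation of the kernel column, reduced to the top layer
  have hrep : ∀ x ∈ F.layer m,
      R m x ξ' = ∑ y ∈ Lm, Gmm x y * (h y / piw G y) := by
    intro x hx
    have h1 := green_rep G hUfin hGm hz hpi (hadK_supp' F P R hP ξ') x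
    have hsub : Lm ⊆ hUfin.toFinset := by
      intro y hy
      exact hUfin.mem_toFinset.mpr (layer_subset_cluster F le_rfl ((hmemL y).mp hy))
    have h2 : ∑ y ∈ Lm, Gmm x y * (h y / piw G y)
        = ∑ y ∈ hUfin.toFinset, Gmm x y * (h y / piw G y) := by
      refine Finset.sum_subset hsub (fun y hyC hyL => ?_)
      have : h y = 0 := hadK_harmonic F P R hP (hUfin.mem_toFinset.mp hyC)
        (fun hl => hyL ((hmemL y).mpr hl)) ξ'
      rw [this, zero_div, mul_zero]
    rw [h2, ← h1, hadK_layer F P R hP hx ξ']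
  -- apply injectivity of R to the defect
  set vv : V → ℝ := fun x => if x ∈ F.layer m then
      (∑ σ ∈ Lm, R m x σ * h σ) - (if x = ξ' then 1 else 0) else 0 with hvv
  have hvsupp : Function.support vv ⊆ F.layer m := by
    intro x hx
    by_contra hxl
    exact hx (by simp only [hvv, if_neg hxl])
  have hkey : ∀ x ∈ F.layer m, ∑ σ ∈ Lm, R m x σ * vv σ = 0 := by
    intro x hx
    have h3 : ∀ σ ∈ Lm, R m x σ * vv σ
        = (R m x σ * ∑ τ ∈ Lm, R m σ τ * h τ) - (if σ = ξ' then R m x σ else 0) := by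
      intro σ hσ
      simp only [hvv, if_pos ((hmemL σ).mp hσ)]
      split_ifs <;> ring
    rw [Finset.sum_congr rfl h3, Finset.sum_sub_distrib]
    have h4 : ∑ σ ∈ Lm, R m x σ * ∑ τ ∈ Lm, R m σ τ * h τ = R m x ξ' := by
      have h5 : ∀ σ ∈ Lm, R m x σ * ∑ τ ∈ Lm, R m σ τ * h τ
          = ∑ τ ∈ Lm, R m x σ * R m σ τ * h τ := by
        intro σ _
        rw [Finset.mul_sum]
        exact Finset.sum_congr rfl (fun τ _ => by ring)
      rw [Finset.sum_congr rfl h5, Finset.sum_comm]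
      have h6 : ∀ τ ∈ Lm, ∑ σ ∈ Lm, R m x σ * R m σ τ * h τ
          = Gmm x τ * (h τ / piw G τ) := by
        intro τ hτ
        rw [← Finset.sum_mul, hGR x hx τ ((hmemL τ).mp hτ)]
        have := (hpi τ).ne'
        field_simp
      rw [Finset.sum_congr rfl h6, ← hrep x hx]
    rw [h4, Finset.sum_ite_eq', if_pos ((hmemL ξ').mpr hξ'), sub_self]
  have hvz := R_inj F hGm hRm hvsupp hkey
  intro x hx
  have := hvz x
  simp only [hvv, if_pos hx] at this
  linarith [this]

lemma dd_sum {ι : Type*} (G : WeightedGraph V) (T : Finset ι) (φ : ι → V → ℝ) (e : V × V) :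
    dd G (fun v => ∑ i ∈ T, φ i v) e = ∑ i ∈ T, dd G (φ i) e := by
  unfold dd
  rw [← Finset.sum_sub_distrib, ← Finset.mul_sum]

lemma dirInner_sum_left (G : WeightedGraph V) {U : Set V} (hU : U.Finite)
    {ι : Type*} (T : Finset ι) (φ : ι → V → ℝ) (g : V → ℝ) :
    dirInner G U (fun v => ∑ i ∈ T, φ i v) g = ∑ i ∈ T, dirInner G U (φ i) g := by
  simp only [dirInner_eq' G hU, dd_sum, Finset.sum_mul]
  rw [Finset.sum_comm, Finset.mul_sum]

lemma dirInner_const_left (G : WeightedGraph V) {U : Set V} (hU : U.Finite)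
    (ψ : V → ℝ) (a : ℝ) (g : V → ℝ) :
    dirInner G U (fun v => ψ v * a) g = a * dirInner G U ψ g := by
  simp only [dirInner_eq' G hU]
  have h1 : ∀ e ∈ (edgesOf_finite G hU).toFinset,
      dd G (fun v => ψ v * a) e * dd G g e = a * (dd G ψ e * dd G g e) := by
    intro e _
    unfold dd
    ring
  rw [Finset.sum_congr rfl h1, ← Finset.mul_sum]
  ring

lemma dirK (P R : ℕ → V → V → ℝ) (Gm : ℕ → V → V → ℝ)
    (hGm : ∀ m, IsGreen G (cluster F m) (Gm m))
    (hP : ∀ m, IsPoisson G (cluster F m) (F.layer m) (P m))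
    (hR : ∀ m, IsSqrtBoundaryGreen F (Gm m) m (R m))
    {n m m' : ℕ} (hmm : m ≤ m') (hm'n : m' ≤ n) {ξ ξ' : V}
    (hξ : ξ ∈ F.layer m) (hξ' : ξ' ∈ F.layer m') :
    dirInner G (cluster F n) (fun v => hadK F P R m v ξ)
      (fun v => hadK F P R m' v ξ') = if ξ = ξ' then 1 else 0 := by
  have hUfin := cluster_finite F n
  have hsuppf : Function.support (fun v => hadK F P R m v ξ) ⊆ cluster F n :=
    (hadK_supp' F P R (hP m) ξ).trans (cluster_mono F (hmm.trans hm'n))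
  rw [dirInner_eq_sum_lap G hUfin _ hsuppf]
  set Lm' := (F.layer_finite m').toFinset with hLm'
  have hmemL : ∀ x, x ∈ Lm' ↔ x ∈ F.layer m' := fun x => (F.layer_finite m').mem_toFinset
  have hsub : Lm' ⊆ hUfin.toFinset := by
    intro y hy
    exact hUfin.mem_toFinset.mpr
      ((cluster_mono F hm'n) (layer_subset_cluster F le_rfl ((hmemL y).mp hy)))
  have hred : ∑ x ∈ hUfin.toFinset,
      hadK F P R m x ξ * lap G (fun v => hadK F P R m' v ξ') x
      = ∑ x ∈ Lm', hadK F P R m x ξ * lap G (fun v => hadK F P R m' v ξ') x := by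
    refine (Finset.sum_subset hsub (fun x hxC hxL => ?_)).symm
    by_cases hxc : x ∈ cluster F m'
    · rw [hadK_harmonic F P R (hP m') hxc
        (fun hl => hxL ((hmemL x).mpr hl)) ξ', mul_zero]
    · rw [hadK_supp F P R (hP m) (fun hc => hxc (cluster_mono F hmm hc)) ξ, zero_mul]
  rw [hred]
  rcases eq_or_lt_of_le hmm with heq | hlt
  · subst heq
    have h7 : ∀ x ∈ Lm', hadK F P R m x ξ * lap G (fun v => hadK F P R m v ξ') x
        = R m x ξ * lap G (fun v => hadK F P R m v ξ') x := by
      intro x hx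
      rw [hadK_layer F P R (hP m) ((hmemL x).mp hx) ξ]
    have h8 : ∀ x ∈ Lm', R m x ξ * lap G (fun v => hadK F P R m v ξ') x
        = R m ξ x * lap G (fun v => hadK F P R m v ξ') x := by
      intro x hx
      rw [(hR m).1 x ξ ((hmemL x).mp hx) hξ]
    rw [Finset.sum_congr rfl h7, Finset.sum_congr rfl h8]
    exact hadK_lap_delta F P R (hGm m) (hP m) (hR m) hξ' ξ hξ
  · have h9 : ∀ x ∈ Lm', hadK F P R m x ξ * lap G (fun v => hadK F P R m' v ξ') x = 0 := by
      intro x hx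
      rw [hadK_supp F P R (hP m) (layer_notin_cluster F hlt ((hmemL x).mp hx)) ξ, zero_mul]
    rw [Finset.sum_eq_zero h9, if_neg]
    intro hc
    exact Set.disjoint_left.mp (F.layer_disjoint m m' (by omega)) hξ (hc ▸ hξ')

end Aux6

/-- the Hadamard operator `Q_n` is an isometric isomorphism
`ℓ²(V(Γ_n)) → H¹₀(V(Γ_n))`: it maps functions supported in `V(Γ_n)` to functions
supported in `V(Γ_n)`, is an isometry from the `ℓ²` inner product to the Dirichlet
inner product, and is bijective onto `H¹₀(V(Γ_n))`. -/
theorem hadQ_isometric_iso (G : WeightedGraph V) (F : DiscreteFoliation G)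
    (Gm : ℕ → V → V → ℝ) (hGm : ∀ m, IsGreen G (cluster F m) (Gm m))
    (P : ℕ → V → V → ℝ) (hP : ∀ m, IsPoisson G (cluster F m) (F.layer m) (P m))
    (R : ℕ → V → V → ℝ) (hR : ∀ m, IsSqrtBoundaryGreen F (Gm m) m (R m))
    (t : V → ℕ) (ht : ∀ ξ, ξ ∈ F.layer (t ξ)) (n : ℕ) :
    (∀ f : V → ℝ, Function.support f ⊆ cluster F n →
      Function.support (hadQ F P R t n f) ⊆ cluster F n) ∧
    (∀ f g : V → ℝ, Function.support f ⊆ cluster F n →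
      Function.support g ⊆ cluster F n →
      dirInner G (cluster F n) (hadQ F P R t n f) (hadQ F P R t n g) =
        l2Inner (cluster F n) f g) ∧
    (∀ f g : V → ℝ, Function.support f ⊆ cluster F n →
      Function.support g ⊆ cluster F n →
      hadQ F P R t n f = hadQ F P R t n g → f = g) ∧
    (∀ u : V → ℝ, Function.support u ⊆ cluster F n →
      ∃ f : V → ℝ, Function.support f ⊆ cluster F n ∧ hadQ F P R t n f = u) := by
  classical
  have hUfin := cluster_finite F n
  have hmemS : ∀ x, x ∈ hUfin.toFinset ↔ x ∈ cluster F n := fun x => hUfin.mem_toFinset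
  have hQ_eq : ∀ (f : V → ℝ) (x : V), hadQ F P R t n f x
      = ∑ y ∈ hUfin.toFinset, hadK F P R (t y) x y * f y :=
    fun f x => finsum_mem_fin hUfin _
  have ht_le : ∀ y ∈ cluster F n, t y ≤ n := by
    intro y hy
    obtain ⟨k, hk, hyk⟩ := (mem_cluster F).mp hy
    rw [t_eq F ht hyk]
    exact hk
  -- Part 1 : support
  have part1 : ∀ f : V → ℝ, Function.support f ⊆ cluster F n →
      Function.support (hadQ F P R t n f) ⊆ cluster F n := by
    intro f _ x hx
    by_contra hxc
    apply hx
    rw [hQ_eq]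
    refine Finset.sum_eq_zero (fun y hy => ?_)
    have hyn : y ∈ cluster F n := (hmemS y).mp hy
    rw [hadK_supp F P R (hP (t y))
      (fun hc => hxc (cluster_mono F (ht_le y hyn) hc)) y, zero_mul]
  -- pairwise kernel inner products
  have hKK : ∀ ξ ∈ hUfin.toFinset, ∀ ξ' ∈ hUfin.toFinset,
      dirInner G (cluster F n) (fun v => hadK F P R (t ξ) v ξ)
        (fun v => hadK F P R (t ξ') v ξ') = if ξ = ξ' then 1 else 0 := by
    intro ξ hξ ξ' hξ'
    have h1 := ht_le ξ ((hmemS ξ).mp hξ)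
    have h2 := ht_le ξ' ((hmemS ξ').mp hξ')
    rcases le_total (t ξ) (t ξ') with hle | hle
    · exact dirK F P R Gm hGm hP hR hle h2 (ht ξ) (ht ξ')
    · rw [dirInner_comm, dirK F P R Gm hGm hP hR hle h1 (ht ξ') (ht ξ)]
      by_cases h : ξ = ξ'
      · rw [if_pos h.symm, if_pos h]
      · rw [if_neg (fun hc => h hc.symm), if_neg h]
  -- Part 2 : isometry
  have part2 : ∀ f g : V → ℝ, Function.support f ⊆ cluster F n →
      Function.support g ⊆ cluster F n →
      dirInner G (cluster F n) (hadQ F P R t n f) (hadQ F P R t n g) =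
        l2Inner (cluster F n) f g := by
    intro f g _ _
    have e1 : dirInner G (cluster F n) (hadQ F P R t n f) (hadQ F P R t n g)
        = ∑ ξ ∈ hUfin.toFinset, dirInner G (cluster F n)
            (fun v => hadK F P R (t ξ) v ξ * f ξ) (hadQ F P R t n g) := by
      rw [show hadQ F P R t n f = fun v => ∑ ξ ∈ hUfin.toFinset,
            (fun v => hadK F P R (t ξ) v ξ * f ξ) v from funext (fun x => hQ_eq f x)]
      exact dirInner_sum_left G hUfin _ _ _
    rw [e1]
    have e2 : ∀ ξ ∈ hUfin.toFinset, dirInner G (cluster F n)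
        (fun v => hadK F P R (t ξ) v ξ * f ξ) (hadQ F P R t n g) = f ξ * g ξ := by
      intro ξ hξ
      rw [dirInner_const_left G hUfin]
      have e3 : dirInner G (cluster F n) (fun v => hadK F P R (t ξ) v ξ)
          (hadQ F P R t n g) = g ξ := by
        rw [dirInner_comm]
        rw [show hadQ F P R t n g = fun v => ∑ ξ' ∈ hUfin.toFinset,
              (fun v => hadK F P R (t ξ') v ξ' * g ξ') v from funext (fun x => hQ_eq g x)]
        rw [dirInner_sum_left G hUfin]
        have e4 : ∀ ξ' ∈ hUfin.toFinset, dirInner G (cluster F n)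
            (fun v => hadK F P R (t ξ') v ξ' * g ξ')
            (fun v => hadK F P R (t ξ) v ξ) = if ξ' = ξ then g ξ' else 0 := by
          intro ξ' hξ'
          rw [dirInner_const_left G hUfin, hKK ξ' hξ' ξ hξ]
          split_ifs <;> ring
        rw [Finset.sum_congr rfl e4, Finset.sum_ite_eq', if_pos hξ]
      rw [e3]
    rw [Finset.sum_congr rfl e2]
    exact (finsum_mem_fin hUfin fun x => f x * g x).symm
  -- Part 3 : injectivity
  have part3 : ∀ f g : V → ℝ, Function.support f ⊆ cluster F n →
      Function.support g ⊆ cluster F n →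
      hadQ F P R t n f = hadQ F P R t n g → f = g := by
    intro f g hf hg hfg
    have hd : Function.support (fun x => f x - g x) ⊆ cluster F n := by
      intro x hx
      rw [Function.mem_support] at hx
      by_contra hc
      apply hx
      rw [Function.notMem_support.mp (fun hs => hc (hf hs)),
        Function.notMem_support.mp (fun hs => hc (hg hs)), sub_zero]
    have hQd : hadQ F P R t n (fun x => f x - g x) = fun _ => (0:ℝ) := by
      funext x
      rw [hQ_eq]
      have e5 : ∀ y ∈ hUfin.toFinset, hadK F P R (t y) x y * (f y - g y)
          = hadK F P R (t y) x y * f y - hadK F P R (t y) x y * g y :=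
        fun y _ => by ring
      rw [Finset.sum_congr rfl e5, Finset.sum_sub_distrib, ← hQ_eq, ← hQ_eq, hfg, sub_self]
    have hiso := part2 (fun x => f x - g x) (fun x => f x - g x) hd hd
    rw [hQd] at hiso
    have h0 : dirInner G (cluster F n) (fun _ : V => (0:ℝ)) (fun _ => (0:ℝ)) = 0 := by
      rw [dirInner_eq' G hUfin, Finset.sum_eq_zero, mul_zero]
      intro e _
      unfold dd
      ring
    rw [h0] at hiso
    have hl2 : l2Inner (cluster F n) (fun x => f x - g x) (fun x => f x - g x)
        = ∑ x ∈ hUfin.toFinset, (f x - g x) * (f x - g x) := finsum_mem_fin hUfin _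
    have hz : ∀ x ∈ hUfin.toFinset, (f x - g x) * (f x - g x) = 0 :=
      (Finset.sum_eq_zero_iff_of_nonneg (fun x _ => mul_self_nonneg _)).mp
        (by rw [← hl2, ← hiso])
    funext x
    by_cases hx : x ∈ cluster F n
    · have := mul_self_eq_zero.mp (hz x ((hmemS x).mpr hx))
      linarith
    · rw [Function.notMem_support.mp (fun hs => hx (hf hs)),
        Function.notMem_support.mp (fun hs => hx (hg hs))]
  -- Part 4 : surjectivity
  have part4 : ∀ u : V → ℝ, Function.support u ⊆ cluster F n →
      ∃ f : V → ℝ, Function.support f ⊆ cluster F n ∧ hadQ F P R t n f = u := by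
    have ext0_def : ∀ (φ : {x // x ∈ hUfin.toFinset} → ℝ) (v : V),
        (fun (φ : {x // x ∈ hUfin.toFinset} → ℝ) (v : V) =>
          if h : v ∈ hUfin.toFinset then φ ⟨v, h⟩ else 0) φ v
        = if h : v ∈ hUfin.toFinset then φ ⟨v, h⟩ else 0 := fun _ _ => rfl
    set ext0 : ({x // x ∈ hUfin.toFinset} → ℝ) → V → ℝ :=
      fun φ v => if h : v ∈ hUfin.toFinset then φ ⟨v, h⟩ else 0 with hext0
    have hext_supp : ∀ φ, Function.support (ext0 φ) ⊆ cluster F n := by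
      intro φ x hx
      by_contra hc
      apply hx
      show (if h : x ∈ hUfin.toFinset then φ ⟨x, h⟩ else 0) = 0
      rw [dif_neg (fun hs => hc ((hmemS x).mp hs))]
    have hext_add : ∀ φ ψ, ext0 (φ + ψ) = fun v => ext0 φ v + ext0 ψ v := by
      intro φ ψ
      funext v
      show (if h : v ∈ hUfin.toFinset then (φ + ψ) ⟨v, h⟩ else 0)
        = (if h : v ∈ hUfin.toFinset then φ ⟨v, h⟩ else 0)
          + (if h : v ∈ hUfin.toFinset then ψ ⟨v, h⟩ else 0)
      by_cases h : v ∈ hUfin.toFinset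
      · rw [dif_pos h, dif_pos h, dif_pos h]; rfl
      · rw [dif_neg h, dif_neg h, dif_neg h, add_zero]
    have hext_smul : ∀ (a : ℝ) φ, ext0 (a • φ) = fun v => a * ext0 φ v := by
      intro a φ
      funext v
      show (if h : v ∈ hUfin.toFinset then (a • φ) ⟨v, h⟩ else 0)
        = a * (if h : v ∈ hUfin.toFinset then φ ⟨v, h⟩ else 0)
      by_cases h : v ∈ hUfin.toFinset
      · rw [dif_pos h, dif_pos h]; rfl
      · rw [dif_neg h, dif_neg h, mul_zero]
    have hadd : ∀ (f₁ f₂ : V → ℝ) (x : V),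
        hadQ F P R t n (fun v => f₁ v + f₂ v) x
          = hadQ F P R t n f₁ x + hadQ F P R t n f₂ x := by
      intro f₁ f₂ x
      rw [hQ_eq, hQ_eq, hQ_eq, ← Finset.sum_add_distrib]
      exact Finset.sum_congr rfl (fun y _ => by ring)
    have hsmul : ∀ (a : ℝ) (f₁ : V → ℝ) (x : V),
        hadQ F P R t n (fun v => a * f₁ v) x = a * hadQ F P R t n f₁ x := by
      intro a f₁ x
      rw [hQ_eq, hQ_eq, Finset.mul_sum]
      exact Finset.sum_congr rfl (fun y _ => by ring)
    set T : ({x // x ∈ hUfin.toFinset} → ℝ) →ₗ[ℝ] ({x // x ∈ hUfin.toFinset} → ℝ) :=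
      { toFun := fun φ x => hadQ F P R t n (ext0 φ) x.1
        map_add' := by
          intro φ ψ
          funext x
          show hadQ F P R t n (ext0 (φ + ψ)) x.1 = _
          rw [hext_add φ ψ]
          exact hadd _ _ x.1
        map_smul' := by
          intro a φ
          funext x
          show hadQ F P R t n (ext0 (a • φ)) x.1 = _
          rw [hext_smul a φ]
          exact hsmul a _ x.1 } with hT
    have hTinj : Function.Injective T := by
      intro φ ψ hTeq
      have hQeq : hadQ F P R t n (ext0 φ) = hadQ F P R t n (ext0 ψ) := by
        funext x
        by_cases hx : x ∈ cluster F n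
        · exact congrFun hTeq ⟨x, (hmemS x).mpr hx⟩
        · rw [Function.notMem_support.mp (fun hs => hx (part1 _ (hext_supp φ) hs)),
            Function.notMem_support.mp (fun hs => hx (part1 _ (hext_supp ψ) hs))]
      have heq := part3 (ext0 φ) (ext0 ψ) (hext_supp φ) (hext_supp ψ) hQeq
      funext x
      have h6 := congrFun heq x.1
      show φ x = ψ x
      have h7 : (if h : (x : V) ∈ hUfin.toFinset then φ ⟨x, h⟩ else 0)
          = (if h : (x : V) ∈ hUfin.toFinset then ψ ⟨x, h⟩ else 0) := h6
      rw [dif_pos x.2, dif_pos x.2] at h7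
      simpa using h7
    have hTsurj : Function.Surjective T := LinearMap.injective_iff_surjective.mp hTinj
    intro u hu
    obtain ⟨ψ, hψ⟩ := hTsurj (fun x => u x.1)
    refine ⟨ext0 ψ, hext_supp ψ, ?_⟩
    funext x
    by_cases hx : x ∈ cluster F n
    · exact congrFun hψ ⟨x, (hmemS x).mpr hx⟩
    · rw [Function.notMem_support.mp (fun hs => hx (part1 _ (hext_supp ψ) hs)),
        Function.notMem_support.mp (fun hs => hx (hu hs))]
  exact ⟨part1, part2, part3, part4⟩

end
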